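/- In the IMU model, suppose each D_{m,kj} is a linear function of a single random variable η_{m,k}, i.e. the k-th row satisfies D_1^{(k)} = α_k + β_k η_{1,k} for fixed row vectors α_k, β_k. With d = (d_1,…,d_K) = (E η_{1,1},…,E η_{1,K}), the matrices in the asymptotic variance of Corollary 3.1 satisfy Σ_D = (∂v/∂d)′ diag(Var(η_{1,1})/v_1,…,Var(η_{1,K})/v_K) (∂v/∂d) and Σ_{Dξ} = (∂v/∂d)′ diag(Cov(η_{1,1},ξ_{1,1})/v_1,…,Cov(η_{1,K},ξ_{1,K})/v_K) (∂v/∂θ). -/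

import Mathlib

open MeasureTheory ProbabilityTheory Filter Asymptotics Matrix Topology

noncomputable section

/-- The covariance of two real-valued random variables. -/
def rcov {Ω : Type*} [MeasurableSpace Ω] (μ : Measure Ω) (f g : Ω → ℝ) : ℝ :=
  (∫ ω, f ω * g ω ∂μ) - (∫ ω, f ω ∂μ) * (∫ ω, g ω ∂μ)

/-- A random vector is centered Gaussian with covariance matrix `S` iff every linear
combination of its coordinates is a (possibly degenerate) centered one-dimensional
Gaussian with the corresponding variance (Cramér–Wold characterization). -/
def IsCenteredGaussian {Ω ι : Type*} [MeasurableSpace Ω] [Fintype ι] (μ : Measure Ω)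
    (V : Ω → ι → ℝ) (S : Matrix ι ι ℝ) : Prop :=
  ∀ c : ι → ℝ,
    μ.map (fun ω => ∑ i, c i * V ω i) =
      gaussianReal 0 (Real.toNNReal (∑ i, ∑ j, c i * S i j * c j))

/-- Convergence in distribution of real-valued random variables to the law `ν`. -/
def TendstoInDistribution {Ω : Type*} [MeasurableSpace Ω] (μ : Measure Ω)
    (Y : ℕ → Ω → ℝ) (ν : Measure ℝ) : Prop :=
  ∀ g : BoundedContinuousFunction ℝ ℝ,
    Tendsto (fun n => ∫ ω, g (Y n ω) ∂μ) atTop (𝓝 (∫ x, g x ∂ν))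

/-- Convergence in distribution of random vectors to the centered multivariate normal
distribution `N(0, S)` (via the Cramér–Wold device). -/
def TendstoGaussian {Ω ι : Type*} [MeasurableSpace Ω] [Fintype ι] (μ : Measure Ω)
    (Y : ℕ → Ω → ι → ℝ) (S : Matrix ι ι ℝ) : Prop :=
  ∀ c : ι → ℝ,
    TendstoInDistribution μ (fun n ω => ∑ i, c i * Y n ω i)
      (gaussianReal 0 (Real.toNNReal (∑ i, ∑ j, c i * S i j * c j)))

/-- A multidimensional (correlated) Wiener process with covariance structure `t ↦ t • Λ`:
it starts at `0`, has a.s. continuous paths, has independent increments, and the increment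
over `[s, t]` is a centered Gaussian vector with covariance matrix `(t - s) • Λ`. -/
def IsWienerProcess {Ω ι : Type*} [MeasurableSpace Ω] [Fintype ι] (μ : Measure Ω)
    (W : ℝ → Ω → ι → ℝ) (L : Matrix ι ι ℝ) : Prop :=
  (∀ᵐ ω ∂μ, W 0 ω = 0) ∧
  (∀ᵐ ω ∂μ, Continuous fun t => W t ω) ∧
  (∀ s t : ℝ, 0 ≤ s → s ≤ t →
    IsCenteredGaussian μ (fun ω i => W t ω i - W s ω i) ((t - s) • L)) ∧
  (∀ ts : ℕ → ℝ, (∀ i, 0 ≤ ts i) → Monotone ts →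
    iIndepFun
      (fun i ω => fun x : ι => W (ts (i + 1)) ω x - W (ts i) ω x) μ)

/-- The immigrated urn (IMU) model.  An urn contains balls of types `0, 1, …, K`; the
number `Z00` of immigration (type-`0`) balls never changes.  For the `m`-th incoming
subject, balls are drawn at random with probabilities proportional to the positive-part
ball counts; a drawn type-`0` ball is replaced and `imr (m-1) k` balls of each treatment
type `k` are added (this being repeated `u m` times), until a treatment ball, say of type
`k`, is drawn: then the subject is assigned to treatment `k` (`X m k = 1`), the response
`ξ m k` is observed, the drawn ball is removed and `D m k j` balls of type `j` are added.
`Zt m k` is the number of type-`k` treatment balls after the `m`-th assignment,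
`u m` the number of type-`0` draws between the `(m-1)`-th and the `m`-th assignment,
and `imr m k` the immigration rate `a_{m,k}`. -/
structure IMUModel (K : ℕ) where
  (Ω : Type)
  [mΩ : MeasurableSpace Ω]
  (μ : Measure Ω)
  [isProb : IsProbabilityMeasure μ]
  (ξ : ℕ → Fin K → Ω → ℝ)
  (D : ℕ → Fin K → Fin K → Ω → ℝ)
  (Zt : ℕ → Fin K → Ω → ℝ)
  (Z00 : ℝ)
  (X : ℕ → Fin K → Ω → ℝ)
  (u : ℕ → Ω → ℕ)
  (imr : ℕ → Fin K → Ω → ℝ)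
  (meas_ξ : ∀ m k, Measurable (ξ m k))
  (meas_D : ∀ m k j, Measurable (D m k j))
  (meas_Zt : ∀ m k, Measurable (Zt m k))
  (meas_X : ∀ m k, Measurable (X m k))
  (meas_u : ∀ m, Measurable (u m))
  (meas_imr : ∀ m k, Measurable (imr m k))
  (Z00_pos : 0 < Z00)
  (Zt0_const : ∀ k ω ω', Zt 0 k ω = Zt 0 k ω')
  (Zt0_pos : ∀ k ω, 0 < Zt 0 k ω)
  (X_indicator : ∀ m k ω, X m k ω = 0 ∨ X m k ω = 1)
  (X_sum_one : ∀ m, 1 ≤ m → ∀ ω, (∑ k, X m k ω) = 1)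
  (imr_nonneg : ∀ m k ω, 0 ≤ imr m k ω)
  (update : ∀ m, 1 ≤ m → ∀ k ω,
    Zt m k ω = Zt (m - 1) k ω + (u m ω : ℝ) * imr (m - 1) k ω
      + ∑ j, X m j ω * (D m j k ω - if j = k then 1 else 0))

attribute [instance] IMUModel.mΩ IMUModel.isProb

namespace IMUModel

variable {K : ℕ} (M : IMUModel K)

/-- `N n k` : number of the first `n` subjects assigned to treatment `k`. -/
def N (n : ℕ) (k : Fin K) (ω : M.Ω) : ℝ := ∑ m ∈ Finset.Icc 1 n, M.X m k ω

/-- `N0 n` : total number of type-`0` draws through the `n`-th assignment. -/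
def N0 (n : ℕ) (ω : M.Ω) : ℝ := ∑ m ∈ Finset.Icc 1 n, (M.u m ω : ℝ)

/-- `θv k` : the unknown parameter `θ_k`, the mean of the response `ξ_{1,k}`. -/
def θv (k : Fin K) : ℝ := ∫ ω, M.ξ 1 k ω ∂M.μ

/-- The martingale `Q n k = ∑_{m=1}^n X_{m,k} (ξ_{m,k} - E ξ_{m,k})`. -/
def Q (n : ℕ) (k : Fin K) (ω : M.Ω) : ℝ :=
  ∑ m ∈ Finset.Icc 1 n, M.X m k ω * (M.ξ m k ω - ∫ ω', M.ξ m k ω' ∂M.μ)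

/-- The estimator `θ̂_{n,k} = (α + S_{n,k})/(β + N_{n,k})`. -/
def est (eα eβ : ℝ) (n : ℕ) (k : Fin K) (ω : M.Ω) : ℝ :=
  (eα + ∑ m ∈ Finset.Icc 1 n, M.X m k ω * M.ξ m k ω) / (eβ + M.N n k ω)

/-- The mean replacement matrix `H = E D_1`. -/
def Hm : Matrix (Fin K) (Fin K) ℝ := Matrix.of fun k j => ∫ ω, M.D 1 k j ω ∂M.μ

/-- The history σ-field generated by everything up to the `n`-th assignment. -/
def hist (n : ℕ) : MeasurableSpace M.Ω :=
  ⨆ m ∈ Finset.Icc 1 n,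
    (MeasurableSpace.comap (fun ω => fun k => M.X m k ω)
        (inferInstance : MeasurableSpace (Fin K → ℝ)) ⊔
     MeasurableSpace.comap (fun ω => fun k => M.ξ m k ω)
        (inferInstance : MeasurableSpace (Fin K → ℝ)) ⊔
     MeasurableSpace.comap (fun ω => fun p : Fin K × Fin K => M.D m p.1 p.2 ω)
        (inferInstance : MeasurableSpace (Fin K × Fin K → ℝ)) ⊔
     MeasurableSpace.comap (fun ω => fun k => M.Zt m k ω)
        (inferInstance : MeasurableSpace (Fin K → ℝ)) ⊔
     MeasurableSpace.comap (M.u m) (inferInstance : MeasurableSpace ℕ))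

/-- The total positive-part number of balls in the urn after `l` immigration rounds
following the `m`-th assignment. -/
def totalPos (m l : ℕ) (ω : M.Ω) : ℝ :=
  M.Z00 + ∑ k, max (M.Zt m k ω + (l : ℝ) * M.imr m k ω) 0

/-- The law of the drawing procedure: given the history, the probability that the
immigration ball is drawn exactly `l` times and then the `m`-th subject is assigned
to treatment `k` is `(∏_{j<l} Z00/|Z⁺ + j a|) ⬝ (Z_k + l a_k)⁺ / |Z⁺ + l a|`. -/
def DrawLaw : Prop :=
  ∀ m, 1 ≤ m → ∀ (l : ℕ) (k : Fin K),
    (MeasureTheory.condExp (M.hist (m - 1)) M.μ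
        (Set.indicator {ω | M.u m ω = l ∧ M.X m k ω = 1} fun _ => (1 : ℝ)))
      =ᵐ[M.μ]
    fun ω => (∏ j ∈ Finset.range l, M.Z00 / M.totalPos (m - 1) j ω) *
      (max (M.Zt (m - 1) k ω + (l : ℝ) * M.imr (m - 1) k ω) 0 / M.totalPos (m - 1) l ω)

/-- The fresh randomness `(ξ_m, D_m)` of the `m`-th subject is independent of the past
and of the `m`-th draw. -/
def FreshIndep : Prop :=
  ∀ m, 1 ≤ m →
    Indep
      (MeasurableSpace.comap
          (fun ω => ((fun k => M.ξ m k ω), fun p : Fin K × Fin K => M.D m p.1 p.2 ω))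
          (inferInstance : MeasurableSpace ((Fin K → ℝ) × (Fin K × Fin K → ℝ))))
      (M.hist (m - 1) ⊔
        MeasurableSpace.comap (fun ω => fun k => M.X m k ω)
          (inferInstance : MeasurableSpace (Fin K → ℝ)) ⊔
        MeasurableSpace.comap (M.u m) (inferInstance : MeasurableSpace ℕ))
      M.μ

/-- For each `k`, `{(ξ_{m,k}, D_{m,k1}, …, D_{m,kK}) : m ≥ 1}` is an i.i.d. sequence. -/
def RowIID : Prop :=
  ∀ k : Fin K,
    iIndepFun
      (fun m ω => (⟨M.ξ (m + 1) k ω, fun j => M.D (m + 1) k j ω⟩ : ℝ × (Fin K → ℝ))) M.μ ∧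
    ∀ m, 1 ≤ m →
      IdentDistrib (fun ω => (⟨M.ξ m k ω, fun j => M.D m k j ω⟩ : ℝ × (Fin K → ℝ)))
        (fun ω => (⟨M.ξ 1 k ω, fun j => M.D 1 k j ω⟩ : ℝ × (Fin K → ℝ))) M.μ M.μ

/-- The immigration rates are `a_{m,k} = a_k(θ̂_m)` where `θ̂_m` is the current estimate
of `θ`. -/
def UsesEstimator (a : (Fin K → ℝ) → Fin K → ℝ) (eα eβ : ℝ) : Prop :=
  0 < eα ∧ 0 < eβ ∧ ∀ m k ω, M.imr m k ω = a (fun i => M.est eα eβ m i ω) k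

/-- Assumption (A1): the functions `a_k(⬝) > 0` are continuous and twice differentiable
at `θ`. -/
def A1 (a : (Fin K → ℝ) → Fin K → ℝ) : Prop :=
  ∀ k, (∀ x, 0 < a x k) ∧ Continuous (fun x => a x k) ∧
    ContDiffAt ℝ 2 (fun x => a x k) M.θv

/-- Assumption (A2): moment conditions on the responses and the adding rules. -/
def A2 (δ C : ℝ) : Prop :=
  0 < δ ∧ δ ≤ 2 ∧
  (∀ m k j, 1 ≤ m → Integrable (fun ω => |M.D m k j ω| ^ (2 + δ)) M.μ) ∧
  (∀ m k, 1 ≤ m → Integrable (fun ω => |M.ξ m k ω| ^ (2 + δ)) M.μ) ∧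
  (∀ m k, 1 ≤ m → ∀ᵐ ω ∂M.μ, -C ≤ M.D m k k ω) ∧
  (∀ k j, k ≠ j → (0 < M.Hm k j ∨ ∀ m, 1 ≤ m → ∀ᵐ ω ∂M.μ, 0 ≤ M.D m k j ω))

/-- Assumption (A3): `H 1′ < 1′`, i.e. each row of `H` sums to less than `1`. -/
def A3 : Prop := ∀ k, ∑ j, M.Hm k j < 1

/-- `v(x) = a(x)(I-H)⁻¹ / (a(x)(I-H)⁻¹ 1′)` as a function of the parameter `x`. -/
def vFun (a : (Fin K → ℝ) → Fin K → ℝ) (x : Fin K → ℝ) (k : Fin K) : ℝ :=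
  Matrix.vecMul (fun i => a x i) (1 - M.Hm)⁻¹ k /
    ∑ j, Matrix.vecMul (fun i => a x i) (1 - M.Hm)⁻¹ j

/-- `s = a(θ)(I-H)⁻¹ 1′`. -/
def sv (a : (Fin K → ℝ) → Fin K → ℝ) : ℝ :=
  ∑ j, Matrix.vecMul (fun i => a M.θv i) (1 - M.Hm)⁻¹ j

/-- The limiting allocation proportion `v = v(θ)`. -/
def vv (a : (Fin K → ℝ) → Fin K → ℝ) (k : Fin K) : ℝ := M.vFun a M.θv k

/-- The matrix `∂v(θ)/∂θ = (∂v_k(θ)/∂θ_j)_{j,k}` of partial derivatives at `θ`. -/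
def dv (a : (Fin K → ℝ) → Fin K → ℝ) : Matrix (Fin K) (Fin K) ℝ :=
  Matrix.of fun j k => fderiv ℝ (fun x => M.vFun a x k) M.θv (Pi.single j 1)

/-- The matrix `A = (I-H)⁻¹(I - 1′v)`. -/
def Am (a : (Fin K → ℝ) → Fin K → ℝ) : Matrix (Fin K) (Fin K) ℝ :=
  (1 - M.Hm)⁻¹ * (1 - Matrix.of fun _ j => M.vv a j)

/-- `Σ_k = Var(D_1^{(k)})`, the covariance matrix of the `k`-th row of `D_1`. -/
def SigK (k : Fin K) : Matrix (Fin K) (Fin K) ℝ :=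
  Matrix.of fun i j => rcov M.μ (M.D 1 k i) (M.D 1 k j)

/-- `Σ11 = ∑_k v_k Σ_k`. -/
def Sig11 (a : (Fin K → ℝ) → Fin K → ℝ) : Matrix (Fin K) (Fin K) ℝ :=
  ∑ k, M.vv a k • M.SigK k

/-- `Σ12 = (Cov(D_{1,kj}, ξ_{1,k}))_{j,k}`. -/
def Sig12 : Matrix (Fin K) (Fin K) ℝ :=
  Matrix.of fun j k => rcov M.μ (M.D 1 k j) (M.ξ 1 k)

/-- `σ_{ξk}² = Var(ξ_{1,k})`. -/
def varxi (k : Fin K) : ℝ := rcov M.μ (M.ξ 1 k) (M.ξ 1 k)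

/-- `Σ_D = A′ Σ11 A`. -/
def SigD (a : (Fin K → ℝ) → Fin K → ℝ) : Matrix (Fin K) (Fin K) ℝ :=
  (M.Am a)ᵀ * M.Sig11 a * M.Am a

/-- `Σ_{Dξ} = A′ Σ12 (∂v/∂θ)`. -/
def SigDxi (a : (Fin K → ℝ) → Fin K → ℝ) : Matrix (Fin K) (Fin K) ℝ :=
  (M.Am a)ᵀ * M.Sig12 * M.dv a

/-- `Σ_ξ = (∂v/∂θ)′ diag(σ_{ξ1}²/v_1, …, σ_{ξK}²/v_K) (∂v/∂θ)`. -/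
def Sigxi (a : (Fin K → ℝ) → Fin K → ℝ) : Matrix (Fin K) (Fin K) ℝ :=
  (M.dv a)ᵀ * Matrix.diagonal (fun k => M.varxi k / M.vv a k) * M.dv a

/-- The `2K × 2K` matrix `Λ` with blocks `Σ11`, `Σ12 diag(v)`, `diag(v) Σ12′` and
`Σ22 diag(v)`, where `Σ22 = diag(Var ξ_{1,1}, …, Var ξ_{1,K})`. -/
def Lam (a : (Fin K → ℝ) → Fin K → ℝ) : Matrix (Fin K ⊕ Fin K) (Fin K ⊕ Fin K) ℝ :=
  Matrix.fromBlocks (M.Sig11 a) (M.Sig12 * Matrix.diagonal (M.vv a))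
    (Matrix.diagonal (M.vv a) * (M.Sig12)ᵀ)
    (Matrix.diagonal (fun k => M.varxi k) * Matrix.diagonal (M.vv a))

end IMUModel

/-! Under the linear adding rule the `k`-th row of `D₁` is `αₖ + βₖ ηₖ`, so
`Var D₁⁽ᵏ⁾ = Var(ηₖ) βₖ′βₖ` and `Cov(D_{1,kj}, ξₖ) = β_{kj} Cov(ηₖ, ξₖ)`; with `β` the matrix of
rows `βₖ` this gives `Σ11 = β′ diag(Var(ηₖ) vₖ) β` and `Σ12 = β′ diag(Cov(ηₖ, ξₖ))`.
On the other side `H(d) = α + diag(d) β`, and since `d(I - H)⁻¹ = (I - H)⁻¹ dH (I - H)⁻¹`,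
differentiating `v(d) = a(I - H(d))⁻¹ / a(I - H(d))⁻¹1′` gives `∂v/∂d = diag(v) β A`.
Both identities then reduce to `A′β′ diag(⋯) β A`; dividing by `vₖ` is legitimate because
`I - H` is a nonsingular M-matrix (nonnegative off-diagonal `H`, row sums `< 1`), so that
`(I - H)⁻¹ ≥ 0` and `a(I - H)⁻¹ > 0`. -/

section MMatrix

variable {n : Type*} [Fintype n] [DecidableEq n] {H : Matrix n n ℝ}

theorem nonneg_of_nonneg_one_sub_mulVec (hH : ∀ i j, i ≠ j → 0 ≤ H i j)
    (hrow : ∀ i, ∑ j, H i j < 1) {x : n → ℝ} (hx : 0 ≤ (1 - H) *ᵥ x) : 0 ≤ x := by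
  by_contra hneg
  obtain ⟨i₁, hi₁⟩ : ∃ i, x i < 0 := by simpa [Pi.le_def] using hneg
  obtain ⟨i, -, hmin⟩ := Finset.exists_min_image Finset.univ x ⟨i₁, Finset.mem_univ _⟩
  have hxi : x i < 0 := (hmin i₁ (Finset.mem_univ _)).trans_lt hi₁
  have hHx : (∑ j, H i j) * x i ≤ (H *ᵥ x) i := by
    rw [Finset.sum_mul, mulVec, dotProduct]
    refine Finset.sum_le_sum fun j _ => ?_
    rcases eq_or_ne i j with rfl | hij
    · exact le_rfl
    · exact mul_le_mul_of_nonneg_left (hmin j (Finset.mem_univ _)) (hH i j hij)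
  have hxi' : 0 ≤ x i - (H *ᵥ x) i := by simpa [sub_mulVec] using hx i
  nlinarith [hrow i]

theorem isUnit_det_one_sub (hH : ∀ i j, i ≠ j → 0 ≤ H i j) (hrow : ∀ i, ∑ j, H i j < 1) :
    IsUnit (1 - H).det := by
  rw [isUnit_iff_ne_zero]
  intro hdet
  obtain ⟨x, hx0, hx⟩ := exists_mulVec_eq_zero_iff.mpr hdet
  have hpos : 0 ≤ x := nonneg_of_nonneg_one_sub_mulVec hH hrow (by rw [hx])
  have hneg : 0 ≤ -x :=
    nonneg_of_nonneg_one_sub_mulVec hH hrow (by rw [mulVec_neg, hx, neg_zero])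
  exact hx0 (le_antisymm (neg_nonneg.mp hneg) hpos)

theorem one_sub_inv_nonneg (hH : ∀ i j, i ≠ j → 0 ≤ H i j) (hrow : ∀ i, ∑ j, H i j < 1)
    (i j : n) : 0 ≤ (1 - H)⁻¹ i j := by
  have hcol : (1 - H) *ᵥ (fun m => (1 - H)⁻¹ m j) = Pi.single j 1 := by
    ext m
    rw [mulVec, dotProduct, ← mul_apply, mul_nonsing_inv _ (isUnit_det_one_sub hH hrow),
      one_apply, Pi.single_apply]
  refine nonneg_of_nonneg_one_sub_mulVec hH hrow (x := fun m => (1 - H)⁻¹ m j) ?_ i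
  rw [hcol]
  exact Pi.single_nonneg.mpr zero_le_one

theorem vecMul_one_sub_inv_pos (hH : ∀ i j, i ≠ j → 0 ≤ H i j) (hrow : ∀ i, ∑ j, H i j < 1)
    {a : n → ℝ} (ha : ∀ i, 0 < a i) (q : n) : 0 < (a ᵥ* (1 - H)⁻¹) q := by
  set w := a ᵥ* (1 - H)⁻¹
  have hw : ∀ i, 0 ≤ w i := fun i =>
    Finset.sum_nonneg fun m _ => mul_nonneg (ha m).le (one_sub_inv_nonneg hH hrow m i)
  have hwa : w ᵥ* (1 - H) = a := by
    rw [vecMul_vecMul, nonsing_inv_mul _ (isUnit_det_one_sub hH hrow), vecMul_one]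
  rw [vecMul_sub, vecMul_one] at hwa
  refine (hw q).lt_of_ne fun hq => ?_
  have hwH : 0 ≤ (w ᵥ* H) q := Finset.sum_nonneg fun i _ => by
    rcases eq_or_ne i q with rfl | hiq
    · rw [← hq, zero_mul]
    · exact mul_nonneg (hw i) (hH i q hiq)
  have haq := congrFun hwa q
  simp only [Pi.sub_apply, ← hq] at haq
  linarith [ha q]

end MMatrix

section MatrixAlgebra

variable {n : Type*} [Fintype n]

def proportions (w : n → ℝ) : n → ℝ := fun k => w k / ∑ j, w j

theorem proportions_pos {w : n → ℝ} (hw : ∀ q, 0 < w q) (k : n) : 0 < proportions w k :=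
  div_pos (hw k) (Finset.sum_pos (fun q _ => hw q) ⟨k, Finset.mem_univ _⟩)

def rowAffine (α β : n → n → ℝ) (d : n → ℝ) : Matrix n n ℝ := of fun i j => α i j + β i j * d i

variable [DecidableEq n]

theorem rowAffine_eq (α β : n → n → ℝ) (d : n → ℝ) :
    rowAffine α β d = of α + diagonal d * of β := by
  ext i j
  simp [rowAffine, diagonal_mul, mul_comm]

theorem vecMul_one_sub_of_const (u v : n → ℝ) :
    u ᵥ* (1 - of fun _ k => v k) = u - (∑ j, u j) • v := by
  ext k
  simp [vecMul, dotProduct, mul_sub, Finset.sum_sub_distrib, one_apply, ← Finset.sum_mul]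

theorem vecMul_diagonal_single_mul (w : n → ℝ) (j : n) (M : Matrix n n ℝ) :
    w ᵥ* (diagonal (Pi.single j 1) * M) = w j • M j := by
  ext m
  simp [vecMul, dotProduct, diagonal_mul, Pi.single_apply]

theorem transpose_diagonal_mul_mul_diagonal_div {v : n → ℝ} (hv : ∀ k, v k ≠ 0) (c : n → ℝ)
    (G X : Matrix n n ℝ) :
    (diagonal v * G)ᵀ * diagonal (fun k => c k / v k) * X = Gᵀ * diagonal c * X := by
  rw [transpose_mul, diagonal_transpose, Matrix.mul_assoc Gᵀ, diagonal_mul_diagonal]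
  congr 3 with k
  exact mul_div_cancel₀ _ (hv k)

end MatrixAlgebra

section Derivative

attribute [local instance] Matrix.linftyOpNormedRing Matrix.linftyOpNormedAlgebra

variable {n E : Type*} [Fintype n] [NormedAddCommGroup E] [NormedSpace ℝ E]

theorem fderiv_proportions_apply {w : E → n → ℝ} {w' : E →L[ℝ] n → ℝ} {x : E}
    (hw : HasFDerivAt w w' x) (hs : ∑ j, w x j ≠ 0) (e : E) (k : n) :
    fderiv ℝ (fun y => proportions (w y) k) x e =
      (w' e k - proportions (w x) k * ∑ j, w' e j) / ∑ j, w x j := by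
  have hcoord := hasFDerivAt_pi'.mp hw
  have hsum := HasFDerivAt.fun_sum (u := Finset.univ) fun j _ => hcoord j
  have hquot := (hcoord k).fun_mul ((hasFDerivAt_inv hs).comp x hsum)
  have hfun : (fun y => proportions (w y) k) = fun y => w y k * (∑ j, w y j)⁻¹ :=
    funext fun y => div_eq_mul_inv _ _
  rw [hfun, (show HasFDerivAt (fun y => w y k * (∑ j, w y j)⁻¹) _ x from hquot).fderiv]
  simp only [Function.comp_apply, _root_.add_apply, _root_.smul_apply,
    ContinuousLinearMap.comp_apply, _root_.sum_apply, ContinuousLinearMap.proj_apply,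
    map_sum, ContinuousLinearMap.toSpanSingleton_apply, smul_eq_mul, mul_neg,
    Finset.sum_neg_distrib, ← Finset.sum_mul, proportions]
  field_simp
  ring

variable [DecidableEq n]

theorem HasFDerivAt.matrix_inv {F : E → Matrix n n ℝ} {F' : E →L[ℝ] Matrix n n ℝ} {x : E}
    (hF : HasFDerivAt F F' x) (hx : IsUnit (F x).det) :
    HasFDerivAt (fun y => (F y)⁻¹)
      ((-ContinuousLinearMap.mulLeftRight ℝ _ (F x)⁻¹ (F x)⁻¹).comp F') x := by
  have : CompleteSpace (Matrix n n ℝ) := FiniteDimensional.complete ℝ _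
  have hinv := hasFDerivAt_ringInverse (𝕜 := ℝ) (nonsingInvUnit (F x) hx)
  rw [coe_units_inv] at hinv
  exact (hinv.comp x hF).congr_of_eventuallyEq
    (.of_forall fun y => nonsing_inv_eq_ringInverse (F y))

theorem hasFDerivAt_one_sub_rowAffine (α β : n → n → ℝ) (d : n → ℝ) :
    HasFDerivAt (fun d => 1 - rowAffine α β d)
      (-(LinearMap.mulRight ℝ (of β) ∘ₗ diagonalLinearMap n ℝ ℝ).toContinuousLinearMap) d := by
  simp only [rowAffine_eq, ← sub_sub]
  exact (LinearMap.mulRight ℝ (of β) ∘ₗ diagonalLinearMap n ℝ ℝ).toContinuousLinearMap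
    |>.hasFDerivAt.const_sub _

theorem fderiv_proportions_vecMul_inv_one_sub_rowAffine (a : n → ℝ) (α β : n → n → ℝ)
    (d : n → ℝ) (hdet : IsUnit (1 - rowAffine α β d).det)
    (hw : ∀ q, 0 < (a ᵥ* (1 - rowAffine α β d)⁻¹) q) :
    (of fun j k => fderiv ℝ (fun d' => proportions (a ᵥ* (1 - rowAffine α β d')⁻¹) k) d
        (Pi.single j 1)) =
      diagonal (proportions (a ᵥ* (1 - rowAffine α β d)⁻¹)) * (of β *
        ((1 - rowAffine α β d)⁻¹ *
          (1 - of fun _ k => proportions (a ᵥ* (1 - rowAffine α β d)⁻¹) k))) := by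
  set B := 1 - rowAffine α β d
  set w := a ᵥ* B⁻¹
  ext j k : 2
  have hs : ∑ q, w q ≠ 0 := (Finset.sum_pos (fun q _ => hw q) ⟨j, Finset.mem_univ _⟩).ne'
  have hinv := (hasFDerivAt_one_sub_rowAffine α β d).matrix_inv hdet
  have hcomp := (Matrix.vecMulBilin ℝ ℝ a).toContinuousLinearMap.hasFDerivAt.comp d hinv
  have hderiv : HasFDerivAt (fun d' => a ᵥ* (1 - rowAffine α β d')⁻¹) _ d := hcomp
  have hdir : a ᵥ* (B⁻¹ * (diagonal (Pi.single j 1) * of β) * B⁻¹) = w j • (β j ᵥ* B⁻¹) := by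
    rw [← vecMul_vecMul, ← vecMul_vecMul, vecMul_diagonal_single_mul, smul_vecMul]
    rfl
  rw [of_apply, fderiv_proportions_apply hderiv hs]
  -- `hderiv` is stated over the `linftyOp` normed-ring instances: unfold its value by `change`
  change ((a ᵥ* -(B⁻¹ * -(diagonal (Pi.single j 1) * of β) * B⁻¹)) k - proportions w k *
    ∑ q, (a ᵥ* -(B⁻¹ * -(diagonal (Pi.single j 1) * of β) * B⁻¹)) q) / ∑ q, w q = _
  rw [mul_neg, neg_mul, neg_neg, hdir]
  have hrow : (of β * (B⁻¹ * (1 - of fun _ k => proportions w k)) : Matrix n n ℝ) j =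
      (β j ᵥ* B⁻¹) ᵥ* (1 - of fun _ k => proportions w k) := by
    rw [vecMul_vecMul]
    rfl
  rw [diagonal_mul, hrow, vecMul_one_sub_of_const]
  simp only [Pi.smul_apply, Pi.sub_apply, smul_eq_mul, ← Finset.mul_sum, proportions]
  field_simp

end Derivative

section Covariance

variable {Ω : Type*} [MeasurableSpace Ω] {μ : Measure Ω} {f g : Ω → ℝ}

theorem rcov_eq_covariance [IsProbabilityMeasure μ] (hf : MemLp f 2 μ) (hg : MemLp g 2 μ) :
    rcov μ f g = cov[f, g; μ] :=
  (covariance_eq_sub hf hg).symm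

theorem rcov_const_mul_left (b : ℝ) : rcov μ (fun ω => b * f ω) g = b * rcov μ f g := by
  simp only [rcov, mul_assoc, integral_const_mul]
  ring

theorem rcov_const_mul_right (b : ℝ) : rcov μ f (fun ω => b * g ω) = b * rcov μ f g := by
  simp only [rcov, mul_left_comm (f _), integral_const_mul]
  ring

variable [IsProbabilityMeasure μ]

theorem rcov_const_add_left (hf : MemLp f 2 μ) (hg : MemLp g 2 μ) (c : ℝ) :
    rcov μ (fun ω => c + f ω) g = rcov μ f g := by
  rw [rcov_eq_covariance (f := fun ω => c + f ω) ((memLp_const c).add hf) hg,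
    covariance_const_add_left (hf.integrable one_le_two), rcov_eq_covariance hf hg]

theorem rcov_const_add_right (hf : MemLp f 2 μ) (hg : MemLp g 2 μ) (c : ℝ) :
    rcov μ f (fun ω => c + g ω) = rcov μ f g := by
  rw [rcov_eq_covariance (g := fun ω => c + g ω) hf ((memLp_const c).add hg),
    covariance_const_add_right (hg.integrable one_le_two), rcov_eq_covariance hf hg]

theorem rcov_const_add (hf : MemLp f 2 μ) (hg : MemLp g 2 μ) (c c' : ℝ) :
    rcov μ (fun ω => c + f ω) (fun ω => c' + g ω) = rcov μ f g := by
  have hg' : MemLp (fun ω => c' + g ω) 2 μ := (memLp_const c').add hg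
  rw [rcov_const_add_left hf hg', rcov_const_add_right hf hg]

theorem memLp_two_of_integrable_abs_rpow (hf : AEStronglyMeasurable f μ) {δ : ℝ} (hδ : 0 ≤ δ)
    (h : Integrable (fun ω => |f ω| ^ (2 + δ)) μ) : MemLp f 2 μ := by
  have h2 := integrable_norm_rpow_of_le hf zero_le_two (by linarith) (by linarith) h
  rw [memLp_two_iff_integrable_sq_norm hf]
  simpa using h2

end Covariance

namespace IMUModel

variable {K : ℕ} {M : IMUModel K}

theorem A2.memLp_D {δ C : ℝ} (h : M.A2 δ C) (k j : Fin K) : MemLp (M.D 1 k j) 2 M.μ :=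
  memLp_two_of_integrable_abs_rpow (M.meas_D 1 k j).aestronglyMeasurable h.1.le
    (h.2.2.1 1 k j le_rfl)

theorem A2.memLp_ξ {δ C : ℝ} (h : M.A2 δ C) (k : Fin K) : MemLp (M.ξ 1 k) 2 M.μ :=
  memLp_two_of_integrable_abs_rpow (M.meas_ξ 1 k).aestronglyMeasurable h.1.le
    (h.2.2.2.1 1 k le_rfl)

theorem A2.Hm_nonneg {δ C : ℝ} (h : M.A2 δ C) (i j : Fin K) (hij : i ≠ j) : 0 ≤ M.Hm i j := by
  rcases h.2.2.2.2.2 i j hij with hpos | hD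
  · exact hpos.le
  · exact integral_nonneg_of_ae (hD 1 le_rfl)

variable {av bv : Fin K → Fin K → ℝ} {η : Fin K → M.Ω → ℝ}

theorem memLp_const_mul_of_linear (hlin : ∀ k j, M.D 1 k j = fun ω => av k j + bv k j * η k ω)
    {p : ENNReal} (hD : ∀ k j, MemLp (M.D 1 k j) p M.μ) (k j : Fin K) :
    MemLp (fun ω => bv k j * η k ω) p M.μ := by
  have hsub : (fun ω => bv k j * η k ω) = fun ω => M.D 1 k j ω - av k j := by
    rw [hlin]; ext; ring
  rw [hsub]
  exact (hD k j).sub (memLp_const _)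

theorem Hm_eq_rowAffine (hlin : ∀ k j, M.D 1 k j = fun ω => av k j + bv k j * η k ω)
    (hD : ∀ k j, Integrable (M.D 1 k j) M.μ) :
    M.Hm = rowAffine av bv fun k => ∫ ω, η k ω ∂M.μ := by
  ext k j
  have hη : Integrable (fun ω => bv k j * η k ω) M.μ := by
    simpa only [← memLp_one_iff_integrable] using
      memLp_const_mul_of_linear hlin (fun k j => memLp_one_iff_integrable.2 (hD k j)) k j
  simp only [Hm, rowAffine, of_apply, hlin, integral_add (integrable_const _) hη, integral_const,
    probReal_univ, one_smul, integral_const_mul]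

theorem SigK_eq_of_linear (hlin : ∀ k j, M.D 1 k j = fun ω => av k j + bv k j * η k ω)
    (hD : ∀ k j, MemLp (M.D 1 k j) 2 M.μ) (k : Fin K) :
    M.SigK k = of fun i j => bv k i * bv k j * rcov M.μ (η k) (η k) := by
  ext i j
  have hη := memLp_const_mul_of_linear hlin hD k
  rw [SigK, of_apply, of_apply, hlin k i, hlin k j, rcov_const_add (hη i) (hη j),
    rcov_const_mul_left, rcov_const_mul_right, mul_assoc]

theorem Sig11_eq_of_linear (hlin : ∀ k j, M.D 1 k j = fun ω => av k j + bv k j * η k ω)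
    (hD : ∀ k j, MemLp (M.D 1 k j) 2 M.μ) (a : (Fin K → ℝ) → Fin K → ℝ) :
    M.Sig11 a = (of bv)ᵀ * diagonal (fun k => rcov M.μ (η k) (η k) * M.vv a k) * of bv := by
  ext i j
  rw [mul_apply]
  simp only [Sig11, SigK_eq_of_linear hlin hD, Matrix.sum_apply, Matrix.smul_apply, of_apply,
    mul_diagonal, transpose_apply, smul_eq_mul]
  exact Finset.sum_congr rfl fun k _ => by ring

theorem Sig12_eq_of_linear (hlin : ∀ k j, M.D 1 k j = fun ω => av k j + bv k j * η k ω)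
    (hD : ∀ k j, MemLp (M.D 1 k j) 2 M.μ) (hξ : ∀ k, MemLp (M.ξ 1 k) 2 M.μ) :
    M.Sig12 = (of bv)ᵀ * diagonal fun k => rcov M.μ (η k) (M.ξ 1 k) := by
  ext j k
  rw [Sig12, of_apply, hlin, rcov_const_add_left (memLp_const_mul_of_linear hlin hD k j) (hξ k),
    rcov_const_mul_left, mul_diagonal, transpose_apply, of_apply]

end IMUModel

theorem imu_linear_adding_rule_variance_general {K : ℕ} (M : IMUModel K)
    (a : (Fin K → ℝ) → Fin K → ℝ) (δ C : ℝ)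
    (hA1 : M.A1 a) (hA2 : M.A2 δ C) (hA3 : M.A3)
    (η : ℕ → Fin K → M.Ω → ℝ)
    (av bv : Fin K → Fin K → ℝ)
    (hlin : ∀ m k j ω, M.D m k j ω = av k j + bv k j * η m k ω) :
    let dmean : Fin K → ℝ := fun k => ∫ ω, η 1 k ω ∂M.μ
    let vd : (Fin K → ℝ) → Fin K → ℝ := fun dd k =>
      Matrix.vecMul (fun i => a M.θv i)
          (1 - Matrix.of fun i j => av i j + bv i j * dd i)⁻¹ k /
        ∑ j, Matrix.vecMul (fun i => a M.θv i)
          (1 - Matrix.of fun i j => av i j + bv i j * dd i)⁻¹ j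
    let dvd : Matrix (Fin K) (Fin K) ℝ :=
      Matrix.of fun j k => fderiv ℝ (fun dd => vd dd k) dmean (Pi.single j 1)
    M.SigD a =
      dvdᵀ * Matrix.diagonal (fun k => rcov M.μ (η 1 k) (η 1 k) / M.vv a k) * dvd ∧
    M.SigDxi a =
      dvdᵀ * Matrix.diagonal (fun k => rcov M.μ (η 1 k) (M.ξ 1 k) / M.vv a k) * M.dv a := by
  intro dmean vd dvd
  have hlin₁ : ∀ k j, M.D 1 k j = fun ω => av k j + bv k j * η 1 k ω := fun k j =>
    funext (hlin 1 k j)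
  have hHm : M.Hm = rowAffine av bv dmean :=
    IMUModel.Hm_eq_rowAffine hlin₁ fun k j => (hA2.memLp_D k j).integrable one_le_two
  have hdet : IsUnit (1 - M.Hm).det := isUnit_det_one_sub hA2.Hm_nonneg hA3
  have hw : ∀ q, 0 < ((fun i => a M.θv i) ᵥ* (1 - M.Hm)⁻¹) q :=
    vecMul_one_sub_inv_pos hA2.Hm_nonneg hA3 fun i => (hA1 i).1 M.θv
  have hv : ∀ k, M.vv a k ≠ 0 := fun k => (proportions_pos hw k).ne'
  have hdvd : dvd = diagonal (M.vv a) * (of bv * M.Am a) := by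
    rw [hHm] at hdet hw
    have h := fderiv_proportions_vecMul_inv_one_sub_rowAffine _ av bv dmean hdet hw
    rw [← hHm] at h
    exact h
  constructor
  · rw [IMUModel.SigD, IMUModel.Sig11_eq_of_linear hlin₁ hA2.memLp_D, hdvd,
      transpose_diagonal_mul_mul_diagonal_div hv]
    simp only [transpose_mul, Matrix.mul_assoc]
    rw [← Matrix.mul_assoc (diagonal _) (diagonal _), diagonal_mul_diagonal]
  · rw [IMUModel.SigDxi, IMUModel.Sig12_eq_of_linear hlin₁ hA2.memLp_D hA2.memLp_ξ, hdvd,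
      transpose_diagonal_mul_mul_diagonal_div hv]
    simp only [transpose_mul, Matrix.mul_assoc]

/-- **Theorem 4.1, equations (4.2)-(4.3).**  If each `D_{m,kj}` is a linear function of a
single random variable `η_{m,k}` (`D_1^{(k)} = α_k + β_k η_{1,k}`), then with
`d = (E η_{1,1}, …, E η_{1,K})`,
`Σ_D = (∂v/∂d)′ diag(Var η_{1,k}/v_k) (∂v/∂d)` and
`Σ_Dξ = (∂v/∂d)′ diag(Cov(η_{1,k}, ξ_{1,k})/v_k) (∂v/∂θ)`. -/
theorem imu_linear_adding_rule_variance {K : ℕ} (M : IMUModel K)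
    (a : (Fin K → ℝ) → Fin K → ℝ) (eα eβ δ C : ℝ)
    (hest : M.UsesEstimator a eα eβ) (hDL : M.DrawLaw) (hFI : M.FreshIndep)
    (hIID : M.RowIID) (hA1 : M.A1 a) (hA2 : M.A2 δ C) (hA3 : M.A3)
    (η : ℕ → Fin K → M.Ω → ℝ) (hηmeas : ∀ m k, Measurable (η m k))
    (av bv : Fin K → Fin K → ℝ)
    (hlin : ∀ m k j ω, M.D m k j ω = av k j + bv k j * η m k ω) :
    let dmean : Fin K → ℝ := fun k => ∫ ω, η 1 k ω ∂M.μ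
    let vd : (Fin K → ℝ) → Fin K → ℝ := fun dd k =>
      Matrix.vecMul (fun i => a M.θv i)
          (1 - Matrix.of fun i j => av i j + bv i j * dd i)⁻¹ k /
        ∑ j, Matrix.vecMul (fun i => a M.θv i)
          (1 - Matrix.of fun i j => av i j + bv i j * dd i)⁻¹ j
    let dvd : Matrix (Fin K) (Fin K) ℝ :=
      Matrix.of fun j k => fderiv ℝ (fun dd => vd dd k) dmean (Pi.single j 1)
    M.SigD a =
      dvdᵀ * Matrix.diagonal (fun k => rcov M.μ (η 1 k) (η 1 k) / M.vv a k) * dvd ∧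
    M.SigDxi a =
      dvdᵀ * Matrix.diagonal (fun k => rcov M.μ (η 1 k) (M.ξ 1 k) / M.vv a k) * M.dv a :=
  imu_linear_adding_rule_variance_general M a δ C hA1 hA2 hA3 η av bv hlin
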